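/- Let p, q ∈ ℝⁿ with p ≠ q and let ω ∈ S^{n−1}. With (p′, q′) the Glassey–Strauss post-collisional momenta, the kernel is invariant: B_n(p, q, ω) = B_n(p′, q′, ω). -/

import Mathlib

noncomputable section

open MeasureTheory Metric Matrix

namespace RelBoltz

/-- The energy `p⁰ = √(c² + |p|²)` of a relativistic particle with momentum `p ∈ ℝⁿ`. -/
def energy (n : ℕ) (c : ℝ) (p : EuclideanSpace ℝ (Fin n)) : ℝ :=
  Real.sqrt (c ^ 2 + ‖p‖ ^ 2)

/-- The Euclidean dot product on `ℝⁿ`. -/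
def dot (n : ℕ) (p q : EuclideanSpace ℝ (Fin n)) : ℝ := ∑ i, p i * q i

/-- The relative momentum `ϱ(p,q) = √(2(p⁰q⁰ − p·q − c²))`. -/
def relMom (n : ℕ) (c : ℝ) (p q : EuclideanSpace ℝ (Fin n)) : ℝ :=
  Real.sqrt (2 * (energy n c p * energy n c q - dot n p q - c ^ 2))

/-- The quantity `s(p,q) = 2(p⁰q⁰ − p·q + c²)`. -/
def sQ (n : ℕ) (c : ℝ) (p q : EuclideanSpace ℝ (Fin n)) : ℝ :=
  2 * (energy n c p * energy n c q - dot n p q + c ^ 2)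

/-- The Minkowski metric `g = diag(−1, 1, …, 1)` as a `(1+n)×(1+n)` matrix. -/
def eta (n : ℕ) : Matrix (Fin (n + 1)) (Fin (n + 1)) ℝ :=
  Matrix.diagonal fun μ => if μ = 0 then -1 else 1

/-- A proper Lorentz transformation: `det Λ = 1` and `Λᵀ g Λ = g`. -/
def IsLorentz (n : ℕ) (Λ : Matrix (Fin (n + 1)) (Fin (n + 1)) ℝ) : Prop :=
  Λ.det = 1 ∧ Λᵀ * eta n * Λ = eta n

/-- The four-vector `p^μ = (p⁰, p) ∈ ℝ^{1+n}`. -/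
def fourVec (n : ℕ) (c : ℝ) (p : EuclideanSpace ℝ (Fin n)) : Fin (n + 1) → ℝ :=
  Fin.cons (energy n c p) fun i => p i

/-- Condition (CM): `Λ^μ_ν (p^ν + q^ν) = (√s, 0, …, 0)`. -/
def CM (n : ℕ) (c : ℝ) (Λ : Matrix (Fin (n + 1)) (Fin (n + 1)) ℝ)
    (p q : EuclideanSpace ℝ (Fin n)) : Prop :=
  Λ.mulVec (fourVec n c p + fourVec n c q) = Fin.cons (Real.sqrt (sQ n c p q)) (fun _ => (0 : ℝ))

/-- The candidate inverse `g Λᵀ g` of a Lorentz transformation. -/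
def Linv (n : ℕ) (Λ : Matrix (Fin (n + 1)) (Fin (n + 1)) ℝ) :
    Matrix (Fin (n + 1)) (Fin (n + 1)) ℝ :=
  eta n * Λᵀ * eta n

/-- The quantity `ρ = (p⁰+q⁰)/√s` appearing in the boost matrix. -/
def rhoB (n : ℕ) (c : ℝ) (p q : EuclideanSpace ℝ (Fin n)) : ℝ :=
  (energy n c p + energy n c q) / Real.sqrt (sQ n c p q)

/-- The boost matrix `Λ_b = [[ρ, −ρ vᵀ], [−ρ v, Iₙ + (ρ−1) v vᵀ/|v|²]]`
with `v = (p+q)/(p⁰+q⁰)`. -/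
def boost (n : ℕ) (c : ℝ) (p q : EuclideanSpace ℝ (Fin n)) :
    Matrix (Fin (n + 1)) (Fin (n + 1)) ℝ :=
  Matrix.of fun μ ν =>
    Fin.cases
      (Fin.cases (rhoB n c p q)
        (fun j => -rhoB n c p q * ((p j + q j) / (energy n c p + energy n c q))) ν)
      (fun i =>
        Fin.cases (-rhoB n c p q * ((p i + q i) / (energy n c p + energy n c q)))
          (fun j =>
            (if i = j then (1 : ℝ) else 0) +
              (rhoB n c p q - 1) *
                ((p i + q i) / (energy n c p + energy n c q)) *
                ((p j + q j) / (energy n c p + energy n c q)) /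
                (∑ k, ((p k + q k) / (energy n c p + energy n c q)) ^ 2)) ν) μ

/-- The vector `k ∈ ℝⁿ`, `k^i = Λ^i_μ (p^μ − q^μ)` (spatial rows of `Λ` applied
to `p^μ − q^μ`). -/
def kvec (n : ℕ) (c : ℝ) (Λ : Matrix (Fin (n + 1)) (Fin (n + 1)) ℝ)
    (p q : EuclideanSpace ℝ (Fin n)) : EuclideanSpace ℝ (Fin n) :=
  WithLp.toLp 2 fun i => Λ.mulVec (fourVec n c p - fourVec n c q) i.succ

/-- `ω̄^μ = (√s/2, (ϱ/2)ω)`. -/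
def wbar (n : ℕ) (c : ℝ) (p q ω : EuclideanSpace ℝ (Fin n)) : Fin (n + 1) → ℝ :=
  Fin.cons (Real.sqrt (sQ n c p q) / 2) fun i => (relMom n c p q / 2) * ω i

/-- `ω̃^μ = (√s/2, −(ϱ/2)ω)`. -/
def wtil (n : ℕ) (c : ℝ) (p q ω : EuclideanSpace ℝ (Fin n)) : Fin (n + 1) → ℝ :=
  Fin.cons (Real.sqrt (sQ n c p q) / 2) fun i => -(relMom n c p q / 2) * ω i

/-- The center-of-momentum post-collisional four-vector `p′^μ = (Λ⁻¹)^μ_ν ω̄^ν`. -/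
def postP (n : ℕ) (c : ℝ) (Λ : Matrix (Fin (n + 1)) (Fin (n + 1)) ℝ)
    (p q ω : EuclideanSpace ℝ (Fin n)) : Fin (n + 1) → ℝ :=
  (Linv n Λ).mulVec (wbar n c p q ω)

/-- The center-of-momentum post-collisional four-vector `q′^μ = (Λ⁻¹)^μ_ν ω̃^ν`. -/
def postQ (n : ℕ) (c : ℝ) (Λ : Matrix (Fin (n + 1)) (Fin (n + 1)) ℝ)
    (p q ω : EuclideanSpace ℝ (Fin n)) : Fin (n + 1) → ℝ :=
  (Linv n Λ).mulVec (wtil n c p q ω)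

/-- The spatial part of a vector in `ℝ^{1+n}`. -/
def spat (n : ℕ) (u : Fin (n + 1) → ℝ) : EuclideanSpace ℝ (Fin n) :=
  WithLp.toLp 2 fun i => u i.succ

/-- `D₁ = (p⁰+q⁰)² − (ω·(p+q))²`. -/
def D1 (n : ℕ) (c : ℝ) (p q ω : EuclideanSpace ℝ (Fin n)) : ℝ :=
  (energy n c p + energy n c q) ^ 2 - dot n ω (p + q) ^ 2

/-- `D₂ = (p⁰+q⁰){ω·(p⁰q − q⁰p)}`. -/
def D2 (n : ℕ) (c : ℝ) (p q ω : EuclideanSpace ℝ (Fin n)) : ℝ :=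
  (energy n c p + energy n c q) * dot n ω (energy n c p • q - energy n c q • p)

/-- `a(p,q,ω) = 2(p⁰+q⁰){ω·(p⁰q − q⁰p)}/D₁`. -/
def aGS (n : ℕ) (c : ℝ) (p q ω : EuclideanSpace ℝ (Fin n)) : ℝ :=
  2 * (energy n c p + energy n c q) * dot n ω (energy n c p • q - energy n c q • p) /
    D1 n c p q ω

/-- `N⁰(p,q,ω) = 2{ω·(p+q)}{ω·(p⁰q − q⁰p)}/D₁`. -/
def N0 (n : ℕ) (c : ℝ) (p q ω : EuclideanSpace ℝ (Fin n)) : ℝ :=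
  2 * dot n ω (p + q) * dot n ω (energy n c p • q - energy n c q • p) / D1 n c p q ω

/-- The Glassey–Strauss post-collisional momentum `p′ = p + a(p,q,ω)ω`. -/
def gsP (n : ℕ) (c : ℝ) (p q ω : EuclideanSpace ℝ (Fin n)) : EuclideanSpace ℝ (Fin n) :=
  p + aGS n c p q ω • ω

/-- The Glassey–Strauss post-collisional momentum `q′ = q − a(p,q,ω)ω`. -/
def gsQ (n : ℕ) (c : ℝ) (p q ω : EuclideanSpace ℝ (Fin n)) : EuclideanSpace ℝ (Fin n) :=
  q - aGS n c p q ω • ω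

/-- The Glassey–Strauss kernel `B(p,q,ω)`. -/
def BGS (n : ℕ) (c : ℝ) (p q ω : EuclideanSpace ℝ (Fin n)) : ℝ :=
  c * (energy n c p + energy n c q) ^ 2 * energy n c p * energy n c q *
    |dot n ω ((energy n c p)⁻¹ • p - (energy n c q)⁻¹ • q)| / D1 n c p q ω ^ 2

/-- The dimensional factor `A(p,q,ω)`. -/
def AGS (n : ℕ) (c : ℝ) (p q ω : EuclideanSpace ℝ (Fin n)) : ℝ :=
  (4 / relMom n c p q) * (energy n c p + energy n c q) * energy n c p * energy n c q *
    |dot n ω ((energy n c p)⁻¹ • p - (energy n c q)⁻¹ • q)| / D1 n c p q ω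

/-- The dimensional Glassey–Strauss kernel `B_n(p,q,ω) = B(p,q,ω)·(A(p,q,ω))^{n−3}`. -/
def Bn (n : ℕ) (c : ℝ) (p q ω : EuclideanSpace ℝ (Fin n)) : ℝ :=
  BGS n c p q ω * AGS n c p q ω ^ ((n : ℤ) - 3)

/-- The Møller velocity `v_ø(p,q) = (c/4) ϱ √s / (p⁰q⁰)`. -/
def moller (n : ℕ) (c : ℝ) (p q : EuclideanSpace ℝ (Fin n)) : ℝ :=
  (c / 4) * relMom n c p q * Real.sqrt (sQ n c p q) / (energy n c p * energy n c q)

/-- The explicit boost form of the combination appearing in the center-of-momentum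
post-collisional momenta. -/
def cmDir (n : ℕ) (c : ℝ) (p q ω : EuclideanSpace ℝ (Fin n)) : EuclideanSpace ℝ (Fin n) :=
  ω + ((rhoB n c p q - 1) * dot n (p + q) ω / ‖p + q‖ ^ 2) • (p + q)

/-- The explicit boost form of the center-of-momentum post-collisional momentum `p′`. -/
def cmP (n : ℕ) (c : ℝ) (p q ω : EuclideanSpace ℝ (Fin n)) : EuclideanSpace ℝ (Fin n) :=
  (1 / 2 : ℝ) • (p + q) + (relMom n c p q / 2) • cmDir n c p q ω

/-- The explicit boost form of the center-of-momentum post-collisional momentum `q′`. -/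
def cmQ (n : ℕ) (c : ℝ) (p q ω : EuclideanSpace ℝ (Fin n)) : EuclideanSpace ℝ (Fin n) :=
  (1 / 2 : ℝ) • (p + q) - (relMom n c p q / 2) • cmDir n c p q ω

/-- The explicit boost form of the vector `k`. -/
def kB (n : ℕ) (c : ℝ) (p q : EuclideanSpace ℝ (Fin n)) : EuclideanSpace ℝ (Fin n) :=
  (-(energy n c p - energy n c q) / Real.sqrt (sQ n c p q)) • (p + q) + (p - q) +
    ((rhoB n c p q - 1) * dot n (p + q) (p - q) / ‖p + q‖ ^ 2) • (p + q)

/-- The center-of-momentum scattering angle `cos θ_cm = (k/|k|)·ω`. -/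
def cosCM (n : ℕ) (c : ℝ) (p q ω : EuclideanSpace ℝ (Fin n)) : ℝ :=
  dot n (kB n c p q) ω / ‖kB n c p q‖

/-- The Glassey–Strauss scattering angle
`cos θ_gs = 1 − 8{ω·(p⁰q − q⁰p)}²/(D₁ϱ²)`. -/
def cosGS (n : ℕ) (c : ℝ) (p q ω : EuclideanSpace ℝ (Fin n)) : ℝ :=
  1 - 8 * dot n ω (energy n c p • q - energy n c q • p) ^ 2 /
    (D1 n c p q ω * relMom n c p q ^ 2)

/-- The surface measure on the unit sphere `S^{n−1} ⊂ ℝⁿ`. -/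
def sphMeasure (n : ℕ) : Measure (sphere (0 : EuclideanSpace ℝ (Fin n)) 1) :=
  (volume : Measure (EuclideanSpace ℝ (Fin n))).toSphere

/-! Write `E = p⁰ + q⁰`, `u = ω·(p+q)` and `g = ω·(p⁰q − q⁰p)`, so that `D₁ = E² − u²`.
Cancelling `p⁰q⁰` against the velocity difference gives `B = cE²|g|/D₁²` and
`A = 4E|g|/(ϱD₁)`. The Glassey–Strauss map conserves `p + q` and the total energy
(`p′⁰ = p⁰ + N⁰`, `q′⁰ = q⁰ − N⁰`), hence `E`, `D₁` and `ϱ`, and it flips the sign of `g`.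
With `a = Ek`, `N⁰ = uk`, all these identities reduce to the single relation `kD₁ = 2g`. -/

open scoped RealInnerProductSpace

section GlasseyStrauss

variable {n : ℕ} {c : ℝ} (p q ω : EuclideanSpace ℝ (Fin n))

lemma dot_eq_inner : dot n p q = ⟪p, q⟫ := by
  simp [dot, PiLp.inner_apply, mul_comm]

lemma dot_add_right : dot n ω (p + q) = dot n ω p + dot n ω q := by
  rw [dot_eq_inner, dot_eq_inner, dot_eq_inner, inner_add_right]

lemma dot_smul_sub_smul (a b : ℝ) : dot n ω (a • q - b • p) = a * dot n ω q - b * dot n ω p := by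
  rw [dot_eq_inner, dot_eq_inner, dot_eq_inner, inner_sub_right, real_inner_smul_right,
    real_inner_smul_right]

lemma energy_sq : energy n c p ^ 2 = c ^ 2 + ‖p‖ ^ 2 :=
  Real.sq_sqrt (by positivity)

lemma energy_pos (hc : c ≠ 0) : 0 < energy n c p :=
  Real.sqrt_pos.2 (by positivity)

lemma abs_dot_lt_energy (hc : c ≠ 0) (hω : ‖ω‖ ≤ 1) : |dot n ω p| < energy n c p := by
  have hp : ‖p‖ < energy n c p :=
    (Real.lt_sqrt (norm_nonneg p)).2 (lt_add_of_pos_left _ (by positivity))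
  calc |dot n ω p| ≤ ‖ω‖ * ‖p‖ := by rw [dot_eq_inner]; exact abs_real_inner_le_norm ω p
    _ ≤ ‖p‖ := mul_le_of_le_one_left (norm_nonneg p) hω
    _ < energy n c p := hp

lemma D1_pos (hc : c ≠ 0) (hω : ‖ω‖ ≤ 1) : 0 < D1 n c p q ω := by
  have hsum : |dot n ω (p + q)| < energy n c p + energy n c q := by
    have hp := abs_dot_lt_energy p ω hc hω
    have hq := abs_dot_lt_energy q ω hc hω
    rw [dot_eq_inner] at hp hq ⊢
    rw [inner_add_right]
    exact (abs_add_le _ _).trans_lt (add_lt_add hp hq)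
  rw [D1, sub_pos, ← sq_abs (dot n ω (p + q))]
  exact pow_lt_pow_left₀ hsum (abs_nonneg _) two_ne_zero

lemma D1_comm : D1 n c q p ω = D1 n c p q ω := by
  simp only [D1, add_comm]

lemma dot_energy_smul_sub_comm :
    dot n ω (energy n c q • p - energy n c p • q) =
      -dot n ω (energy n c p • q - energy n c q • p) := by
  rw [dot_eq_inner, dot_eq_inner, ← inner_neg_right, neg_sub]

lemma aGS_comm : aGS n c q p ω = -aGS n c p q ω := by
  rw [aGS, aGS, D1_comm, dot_energy_smul_sub_comm, add_comm (energy n c q)]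
  ring

lemma N0_comm : N0 n c q p ω = -N0 n c p q ω := by
  rw [N0, N0, D1_comm, dot_energy_smul_sub_comm, add_comm q]
  ring

lemma gsP_comm : gsP n c q p ω = gsQ n c p q ω := by
  rw [gsP, gsQ, aGS_comm, neg_smul, sub_eq_add_neg]

lemma gsP_add_gsQ : gsP n c p q ω + gsQ n c p q ω = p + q := by
  rw [gsP, gsQ]
  abel

lemma dot_gsP (hω : ‖ω‖ = 1) : dot n ω (gsP n c p q ω) = dot n ω p + aGS n c p q ω := by
  rw [gsP, dot_eq_inner, dot_eq_inner, inner_add_right, real_inner_smul_right,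
    real_inner_self_eq_norm_sq, hω, one_pow, mul_one]

lemma dot_gsQ (hω : ‖ω‖ = 1) : dot n ω (gsQ n c p q ω) = dot n ω q - aGS n c p q ω := by
  rw [← gsP_comm, dot_gsP q p ω hω, aGS_comm, sub_eq_add_neg]

lemma exists_aGS_N0_scale (hc : c ≠ 0) (hω : ‖ω‖ ≤ 1) :
    ∃ k : ℝ, k * ((energy n c p + energy n c q) ^ 2 - (dot n ω p + dot n ω q) ^ 2) =
        2 * (energy n c p * dot n ω q - energy n c q * dot n ω p) ∧
      aGS n c p q ω = (energy n c p + energy n c q) * k ∧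
      N0 n c p q ω = (dot n ω p + dot n ω q) * k := by
  refine ⟨2 * dot n ω (energy n c p • q - energy n c q • p) / D1 n c p q ω, ?_, ?_, ?_⟩
  · rw [← dot_smul_sub_smul, ← dot_add_right]
    exact div_mul_cancel₀ _ (D1_pos p q ω hc hω).ne'
  · rw [aGS]
    ring
  · rw [N0, dot_add_right]
    ring

lemma energy_add_N0_pos (hc : c ≠ 0) (hω : ‖ω‖ ≤ 1) : 0 < energy n c p + N0 n c p q ω := by
  have hD := D1_pos p q ω hc hω
  have he₁ := energy_pos p hc
  have he₂ := energy_pos q hc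
  have hα : dot n ω p ^ 2 < energy n c p ^ 2 := by
    rw [← sq_abs]
    exact pow_lt_pow_left₀ (abs_dot_lt_energy p ω hc hω) (abs_nonneg _) two_ne_zero
  set e₁ := energy n c p
  set e₂ := energy n c q
  set g := dot n ω (e₁ • q - e₂ • p)
  have key : e₁ + N0 n c p q ω = (g ^ 2 + (e₁ + e₂) ^ 2 * (e₁ ^ 2 - dot n ω p ^ 2)) /
      (e₁ * D1 n c p q ω) := by
    rw [eq_div_iff (mul_pos he₁ hD).ne', N0]
    field_simp
    simp only [g, D1, dot_add_right, dot_smul_sub_smul]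
    ring
  rw [key]
  exact div_pos (add_pos_of_nonneg_of_pos (sq_nonneg g)
    (mul_pos (by positivity) (sub_pos.2 hα))) (mul_pos he₁ hD)

lemma energy_gsP (hc : c ≠ 0) (hω : ‖ω‖ = 1) :
    energy n c (gsP n c p q ω) = energy n c p + N0 n c p q ω := by
  rw [energy, ← Real.sqrt_sq (energy_add_N0_pos p q ω hc hω.le).le]
  congr 1
  obtain ⟨k, hk, ha, hN⟩ := exists_aGS_N0_scale p q ω hc hω.le
  rw [gsP, norm_add_sq_real, norm_smul, Real.norm_eq_abs, hω, mul_one, sq_abs,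
    real_inner_smul_right, real_inner_comm, ← dot_eq_inner, ha, hN]
  linear_combination (-1 : ℝ) * energy_sq (c := c) p + k * hk

lemma energy_gsQ (hc : c ≠ 0) (hω : ‖ω‖ = 1) :
    energy n c (gsQ n c p q ω) = energy n c q - N0 n c p q ω := by
  rw [← gsP_comm, energy_gsP q p ω hc hω, N0_comm, sub_eq_add_neg]

lemma energy_gsP_add_energy_gsQ (hc : c ≠ 0) (hω : ‖ω‖ = 1) :
    energy n c (gsP n c p q ω) + energy n c (gsQ n c p q ω) = energy n c p + energy n c q := by
  rw [energy_gsP p q ω hc hω, energy_gsQ p q ω hc hω]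
  ring

lemma D1_gsP_gsQ (hc : c ≠ 0) (hω : ‖ω‖ = 1) :
    D1 n c (gsP n c p q ω) (gsQ n c p q ω) ω = D1 n c p q ω := by
  rw [D1, D1, energy_gsP_add_energy_gsQ p q ω hc hω, gsP_add_gsQ]

lemma dot_energy_smul_sub_gsP_gsQ (hc : c ≠ 0) (hω : ‖ω‖ = 1) :
    dot n ω (energy n c (gsP n c p q ω) • gsQ n c p q ω -
        energy n c (gsQ n c p q ω) • gsP n c p q ω) =
      -dot n ω (energy n c p • q - energy n c q • p) := by
  obtain ⟨k, hk, ha, hN⟩ := exists_aGS_N0_scale p q ω hc hω.le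
  rw [dot_smul_sub_smul, dot_smul_sub_smul, energy_gsP p q ω hc hω, energy_gsQ p q ω hc hω,
    dot_gsP p q ω hω, dot_gsQ p q ω hω, ha, hN]
  linear_combination (-1 : ℝ) * hk

lemma relMom_eq_sqrt :
    relMom n c p q = √((energy n c p + energy n c q) ^ 2 - ‖p + q‖ ^ 2 - 4 * c ^ 2) := by
  rw [relMom, norm_add_sq_real, ← dot_eq_inner]
  congr 1
  linear_combination (-1 : ℝ) * (energy_sq (c := c) p + energy_sq (c := c) q)

lemma relMom_gsP_gsQ (hc : c ≠ 0) (hω : ‖ω‖ = 1) :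
    relMom n c (gsP n c p q ω) (gsQ n c p q ω) = relMom n c p q := by
  rw [relMom_eq_sqrt, relMom_eq_sqrt, energy_gsP_add_energy_gsQ p q ω hc hω, gsP_add_gsQ]

lemma energy_mul_energy_mul_abs_dot (hc : c ≠ 0) :
    energy n c p * energy n c q * |dot n ω ((energy n c p)⁻¹ • p - (energy n c q)⁻¹ • q)| =
      |dot n ω (energy n c p • q - energy n c q • p)| := by
  have he₁ := energy_pos p hc
  have he₂ := energy_pos q hc
  rw [← abs_of_pos (mul_pos he₁ he₂), ← abs_mul, ← abs_neg (dot n ω _)]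
  congr 1
  rw [dot_smul_sub_smul, dot_smul_sub_smul]
  field_simp
  ring

lemma BGS_eq (hc : c ≠ 0) : BGS n c p q ω = c * (energy n c p + energy n c q) ^ 2 *
    |dot n ω (energy n c p • q - energy n c q • p)| / D1 n c p q ω ^ 2 := by
  rw [BGS, ← energy_mul_energy_mul_abs_dot p q ω hc]
  ring

lemma AGS_eq (hc : c ≠ 0) : AGS n c p q ω = 4 / relMom n c p q * (energy n c p + energy n c q) *
    |dot n ω (energy n c p • q - energy n c q • p)| / D1 n c p q ω := by
  rw [AGS, ← energy_mul_energy_mul_abs_dot p q ω hc]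
  ring

lemma BGS_gsP_gsQ (hc : c ≠ 0) (hω : ‖ω‖ = 1) :
    BGS n c (gsP n c p q ω) (gsQ n c p q ω) ω = BGS n c p q ω := by
  rw [BGS_eq _ _ _ hc, BGS_eq _ _ _ hc, energy_gsP_add_energy_gsQ p q ω hc hω,
    dot_energy_smul_sub_gsP_gsQ p q ω hc hω, abs_neg, D1_gsP_gsQ p q ω hc hω]

lemma AGS_gsP_gsQ (hc : c ≠ 0) (hω : ‖ω‖ = 1) :
    AGS n c (gsP n c p q ω) (gsQ n c p q ω) ω = AGS n c p q ω := by
  rw [AGS_eq _ _ _ hc, AGS_eq _ _ _ hc, energy_gsP_add_energy_gsQ p q ω hc hω,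
    dot_energy_smul_sub_gsP_gsQ p q ω hc hω, abs_neg, D1_gsP_gsQ p q ω hc hω,
    relMom_gsP_gsQ p q ω hc hω]

end GlasseyStrauss

theorem statement15_general (n : ℕ) (c : ℝ) (hc : 0 < c)
    (p q : EuclideanSpace ℝ (Fin n))
    (ω : EuclideanSpace ℝ (Fin n)) (hω : ‖ω‖ = 1) :
    Bn n c p q ω = Bn n c (gsP n c p q ω) (gsQ n c p q ω) ω := by
  rw [Bn, Bn, BGS_gsP_gsQ p q ω hc.ne' hω, AGS_gsP_gsQ p q ω hc.ne' hω]

/-- the Glassey–Strauss kernel is invariant under the pre-post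
collisional map: `B_n(p, q, ω) = B_n(p′, q′, ω)`. -/
theorem statement15 (n : ℕ) (hn : 2 ≤ n) (c : ℝ) (hc : 0 < c)
    (p q : EuclideanSpace ℝ (Fin n)) (hpq : p ≠ q)
    (ω : EuclideanSpace ℝ (Fin n)) (hω : ‖ω‖ = 1) :
    Bn n c p q ω = Bn n c (gsP n c p q ω) (gsQ n c p q ω) ω :=
  statement15_general n c hc p q ω hω

end RelBoltz
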